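/- If the torus T² is covered by three closed sets of diameter < √13/6, and some vertical line l_x meets only one covering set F_c, then a set of diameter ≥ √13/6 exists (contradiction). That is, no vertical line can be monochromatic. -/

import Mathlib

open scoped Real Pointwise

/-- The Euclidean (flat) distance on the torus `T² = ℝ²/ℤ²`. -/
noncomputable def torusDist (u v : AddCircle (1:ℝ) × AddCircle (1:ℝ)) : ℝ :=
  Real.sqrt (‖u.1 - v.1‖ ^ 2 + ‖u.2 - v.2‖ ^ 2)

/-- The diameter of a subset of the flat torus. -/
noncomputable def torusDiam (F : Set (AddCircle (1:ℝ) × AddCircle (1:ℝ))) : ℝ :=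
  sSup {d | ∃ u ∈ F, ∃ v ∈ F, d = torusDist u v}

/-- `d_m(T²)`: infimum of the maximal diameter over coverings of `T²` by `m` sets. -/
noncomputable def dTor (m : ℕ) : ℝ :=
  sInf {τ | ∃ F : Fin m → Set (AddCircle (1:ℝ) × AddCircle (1:ℝ)),
    (⋃ i, F i) = Set.univ ∧ ∀ i, torusDiam (F i) ≤ τ}

/-- The vertical line (circle) `l_x = {x} × T¹` on the flat torus. -/
def vline (x : ℝ) : Set (AddCircle (1:ℝ) × AddCircle (1:ℝ)) :=
  {p | p.1 = (x : AddCircle (1:ℝ))}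

/-!
Two points of one set whose heights differ by `1/2` are less than `1/3` apart horizontally, for
otherwise their distance is at least `√(1/9 + 1/4) = √13/6`. Against a line `l_a ⊆ A` this keeps
`A` off `l_{a+1/3}` and `l_{a+2/3}`, and connectedness of `l_{a+1/3}` makes these two lines lie in
the other two sets `B` and `C`, one each. On every horizontal circle the arc between two consecutive
lines is connected, so it contains a point lying in the sets of both lines. For these crossing points
at two heights `1/2` apart, the six horizontal differences between crossing points of a common set
at different heights are all `< 1/3`, yet they telescope to `2`.
-/

open Set

local notation "𝕋" => AddCircle (1:ℝ)

lemma UnitAddCircle.le_norm_coe {t r : ℝ} (h₁ : t ≤ r) (h₂ : r ≤ 1 - t) :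
    t ≤ ‖(r : UnitAddCircle)‖ := by
  rcases le_or_gt t 0 with ht | ht
  · exact ht.trans (norm_nonneg _)
  rw [UnitAddCircle.norm_eq, abs_sub_round_eq_min,
    Int.fract_eq_self.mpr ⟨by linarith, by linarith⟩]
  exact le_min h₁ (by linarith)

lemma UnitAddCircle.exists_norm_sub_eq_half (y : UnitAddCircle) : ∃ y', ‖y - y'‖ = 1 / 2 :=
  ⟨y - ((1 / 2 : ℝ) : UnitAddCircle), by simpa using AddCircle.norm_half_period_eq (1 : ℝ)⟩

lemma vline_add_one (x : ℝ) : vline (x + 1) = vline x := by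
  simp only [vline, AddCircle.coe_add_period]

lemma torusDist_le_one (u v : 𝕋 × 𝕋) : torusDist u v ≤ 1 := by
  have h₁ : ‖u.1 - v.1‖ ≤ 1 / 2 := by simpa using AddCircle.norm_le_half_period (1:ℝ) one_ne_zero
  have h₂ : ‖u.2 - v.2‖ ≤ 1 / 2 := by simpa using AddCircle.norm_le_half_period (1:ℝ) one_ne_zero
  rw [torusDist, Real.sqrt_le_one]
  nlinarith [norm_nonneg (u.1 - v.1), norm_nonneg (u.2 - v.2)]

lemma torusDist_le_torusDiam {F : Set (𝕋 × 𝕋)} {u v : 𝕋 × 𝕋} (hu : u ∈ F) (hv : v ∈ F) :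
    torusDist u v ≤ torusDiam F :=
  le_csSup ⟨1, by rintro _ ⟨u, -, v, -, rfl⟩; exact torusDist_le_one u v⟩ ⟨u, hu, v, hv, rfl⟩

lemma sqrt_thirteen_div_six_le_torusDist {u v : 𝕋 × 𝕋} (h₁ : 1 / 3 ≤ ‖u.1 - v.1‖)
    (h₂ : 1 / 2 ≤ ‖u.2 - v.2‖) : √13 / 6 ≤ torusDist u v := by
  have h : √13 / 6 = √((1 / 3) ^ 2 + (1 / 2) ^ 2) := by
    rw [show ((1:ℝ) / 3) ^ 2 + (1 / 2) ^ 2 = 13 / 6 ^ 2 by norm_num, Real.sqrt_div' _ (by norm_num),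
      Real.sqrt_sq (by norm_num)]
  rw [h, torusDist]
  gcongr

lemma lt_add_third_of_mem {S : Set (𝕋 × 𝕋)} (hS : ∀ u ∈ S, ∀ v ∈ S, torusDist u v < √13 / 6)
    {a b : ℝ} {y y' : 𝕋} (hu : ((a : 𝕋), y) ∈ S) (hv : ((b : 𝕋), y') ∈ S)
    (hy : ‖y - y'‖ = 1 / 2) (hab : a ≤ b + 2 / 3) : a < b + 1 / 3 := by
  by_contra! h
  have hx : 1 / 3 ≤ ‖((a : 𝕋), y).1 - ((b : 𝕋), y').1‖ := by
    rw [← AddCircle.coe_sub]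
    exact UnitAddCircle.le_norm_coe (by linarith) (by linarith)
  exact (hS _ hu _ hv).not_ge (sqrt_thirteen_div_six_le_torusDist hx hy.ge)

lemma notMem_of_vline_subset {S : Set (𝕋 × 𝕋)}
    (hS : ∀ u ∈ S, ∀ v ∈ S, torusDist u v < √13 / 6) {a b : ℝ} (hl : vline b ⊆ S)
    (hba : b + 1 / 3 ≤ a) (hab : a ≤ b + 2 / 3) (y : 𝕋) : ((a : 𝕋), y) ∉ S := by
  intro hu
  obtain ⟨y', hy⟩ := UnitAddCircle.exists_norm_sub_eq_half y
  have := lt_add_third_of_mem hS hu (hl rfl) hy hab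
  linarith

lemma isPreconnected_vline (x : ℝ) : IsPreconnected (vline x) := by
  have h : vline x = range (Prod.mk (x : 𝕋)) := by ext ⟨a, y⟩; simp [vline, eq_comm]
  rw [h]
  exact isPreconnected_range (continuous_const.prodMk continuous_id)

variable {ι : Type*} {F : ι → Set (𝕋 × 𝕋)} {i j k : ι}

lemma vline_add_third_subset (hclosed : ∀ i, IsClosed (F i))
    (hsmall : ∀ i, ∀ u ∈ F i, ∀ v ∈ F i, torusDist u v < √13 / 6)
    (hcov : ∀ u, u ∈ F i ∨ u ∈ F j ∨ u ∈ F k) {a : ℝ} (hi : vline a ⊆ F i) :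
    (vline (a + 1 / 3) ⊆ F j ∧ vline (a + 2 / 3) ⊆ F k) ∨
      (vline (a + 1 / 3) ⊆ F k ∧ vline (a + 2 / 3) ⊆ F j) := by
  have hoff {b : ℝ} (h₁ : a + 1 / 3 ≤ b) (h₂ : b ≤ a + 2 / 3) (y : 𝕋) : ((b : 𝕋), y) ∉ F i :=
    notMem_of_vline_subset (hsmall i) hi h₁ h₂ y
  have hnext {j k : ι} (hcov : ∀ u, u ∈ F i ∨ u ∈ F j ∨ u ∈ F k)
      (hj : vline (a + 1 / 3) ⊆ F j) : vline (a + 2 / 3) ⊆ F k := by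
    rintro ⟨_, y⟩ (rfl : _ = _)
    rcases hcov (((a + 2 / 3 : ℝ) : 𝕋), y) with h | h | h
    · exact absurd h (hoff (by linarith) le_rfl y)
    · exact absurd h (notMem_of_vline_subset (hsmall j) hj (by linarith) (by linarith) y)
    · exact h
  have hunion : vline (a + 1 / 3) ⊆ F j ∪ F k := by
    rintro ⟨_, y⟩ (rfl : _ = _)
    exact (hcov _).resolve_left (hoff le_rfl (by linarith) y)
  -- a point of `l_{a+1/3}` in both sets leaves the point of `l_{a+2/3}` half a turn above it uncovered
  have hdisj : vline (a + 1 / 3) ∩ (F j ∩ F k) = ∅ := by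
    refine eq_empty_of_forall_notMem ?_
    rintro ⟨_, y⟩ ⟨(rfl : _ = _), hyj, hyk⟩
    obtain ⟨y', hy⟩ := UnitAddCircle.exists_norm_sub_eq_half y
    rw [norm_sub_rev] at hy
    rcases hcov (((a + 2 / 3 : ℝ) : 𝕋), y') with h | h | h
    · exact hoff (by linarith) le_rfl y' h
    · linarith [lt_add_third_of_mem (hsmall j) h hyj hy (by linarith)]
    · linarith [lt_add_third_of_mem (hsmall k) h hyk hy (by linarith)]
  rcases isPreconnected_iff_subset_of_disjoint_closed.mp (isPreconnected_vline _) _ _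
    (hclosed j) (hclosed k) hunion hdisj with h | h
  · exact Or.inl ⟨h, hnext hcov h⟩
  · exact Or.inr ⟨h, hnext (fun u => (hcov u).imp_right Or.symm) h⟩

lemma exists_mem_inter_of_vline_subset (hclosed : ∀ i, IsClosed (F i))
    (hsmall : ∀ i, ∀ u ∈ F i, ∀ v ∈ F i, torusDist u v < √13 / 6)
    (hcov : ∀ u, u ∈ F i ∨ u ∈ F j ∨ u ∈ F k) {b : ℝ} (hi : vline b ⊆ F i)
    (hj : vline (b + 1 / 3) ⊆ F j) (hk : vline (b - 1 / 3) ⊆ F k) (y : 𝕋) :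
    ∃ p ∈ Icc b (b + 1 / 3), ((p : 𝕋), y) ∈ F i ∩ F j := by
  have hs : IsPreconnected ((fun p : ℝ => ((p : 𝕋), y)) '' Icc b (b + 1 / 3)) :=
    isPreconnected_Icc.image _
      ((AddCircle.continuous_mk' (1 : ℝ)).prodMk continuous_const).continuousOn
  have hunion : (fun p : ℝ => ((p : 𝕋), y)) '' Icc b (b + 1 / 3) ⊆ F i ∪ F j := by
    rintro _ ⟨p, hp, rfl⟩
    refine (hcov _).imp_right fun h => h.resolve_right ?_
    exact notMem_of_vline_subset (hsmall k) hk (by linarith [hp.1]) (by linarith [hp.2]) y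
  obtain ⟨_, ⟨p, hp, rfl⟩, hpij⟩ := isPreconnected_closed_iff.mp hs _ _ (hclosed i) (hclosed j)
    hunion ⟨_, mem_image_of_mem _ (left_mem_Icc.mpr (by norm_num)), hi rfl⟩
    ⟨_, mem_image_of_mem _ (right_mem_Icc.mpr (by norm_num)), hj rfl⟩
  exact ⟨p, hp, hpij⟩

lemma false_of_three_vline_subset (hclosed : ∀ i, IsClosed (F i))
    (hsmall : ∀ i, ∀ u ∈ F i, ∀ v ∈ F i, torusDist u v < √13 / 6)
    (hcov : ∀ u, u ∈ F i ∨ u ∈ F j ∨ u ∈ F k) {b : ℝ} (hi : vline b ⊆ F i)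
    (hj : vline (b + 1 / 3) ⊆ F j) (hk : vline (b + 2 / 3) ⊆ F k) : False := by
  have hij := exists_mem_inter_of_vline_subset hclosed hsmall hcov hi hj
    (by rwa [← vline_add_one, show b - 1 / 3 + 1 = b + 2 / 3 by ring])
  have hjk := exists_mem_inter_of_vline_subset hclosed hsmall (fun u => (hcov u).rotate) hj
    (by rwa [show b + 1 / 3 + 1 / 3 = b + 2 / 3 by ring]) (by rwa [add_sub_cancel_right])
  have hki := exists_mem_inter_of_vline_subset hclosed hsmall (fun u => (hcov u).rotate.rotate) hk
    (by rwa [show b + 2 / 3 + 1 / 3 = b + 1 by ring, vline_add_one])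
    (by rwa [show b + 2 / 3 - 1 / 3 = b + 1 / 3 by ring])
  obtain ⟨y, hy⟩ := UnitAddCircle.exists_norm_sub_eq_half 0
  have hy' : ‖y - 0‖ = 1 / 2 := by rwa [norm_sub_rev]
  obtain ⟨p, hp, hpi, hpj⟩ := hij 0
  obtain ⟨p', hp', hp'i, hp'j⟩ := hij y
  obtain ⟨q, hq, hqj, hqk⟩ := hjk 0
  obtain ⟨q', hq', hq'j, hq'k⟩ := hjk y
  obtain ⟨r, hr, hrk, hri⟩ := hki 0
  obtain ⟨r', hr', hr'k, hr'i⟩ := hki y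
  rw [mem_Icc] at hp hp' hq hq' hr hr'
  rw [← AddCircle.coe_add_period 1 p] at hpi
  rw [← AddCircle.coe_add_period 1 p'] at hp'i
  -- the six differences below telescope to `2`
  have := lt_add_third_of_mem (hsmall j) hqj hp'j hy (by linarith)
  have := lt_add_third_of_mem (hsmall j) hq'j hpj hy' (by linarith)
  have := lt_add_third_of_mem (hsmall k) hrk hq'k hy (by linarith)
  have := lt_add_third_of_mem (hsmall k) hr'k hqk hy' (by linarith)
  have := lt_add_third_of_mem (hsmall i) hpi hr'i hy (by linarith)
  have := lt_add_third_of_mem (hsmall i) hp'i hri hy' (by linarith)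
  linarith

lemma false_of_vline_subset (hclosed : ∀ i, IsClosed (F i))
    (hsmall : ∀ i, ∀ u ∈ F i, ∀ v ∈ F i, torusDist u v < √13 / 6)
    (hcov : ∀ u, u ∈ F i ∨ u ∈ F j ∨ u ∈ F k) {a : ℝ} (hi : vline a ⊆ F i) : False := by
  rcases vline_add_third_subset hclosed hsmall hcov hi with ⟨hj, hk⟩ | ⟨hk, hj⟩
  · exact false_of_three_vline_subset hclosed hsmall hcov hi hj hk
  · exact false_of_three_vline_subset hclosed hsmall (fun u => (hcov u).imp_right Or.symm) hi hk hj

theorem torus_no_monochromatic_line (F : Fin 3 → Set (AddCircle (1:ℝ) × AddCircle (1:ℝ)))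
    (hclosed : ∀ i, IsClosed (F i))
    (hcover : (⋃ i, F i) = Set.univ)
    (hdiam : ∀ i, torusDiam (F i) < Real.sqrt 13 / 6)
    (c : Fin 3) (x : ℝ)
    (hmono : ∀ i, i ≠ c → vline x ∩ F i = ∅) :
    False := by
  have hcov (u : 𝕋 × 𝕋) : ∃ i, u ∈ F i := mem_iUnion.mp (hcover ▸ mem_univ u)
  have hsmall (i : Fin 3) : ∀ u ∈ F i, ∀ v ∈ F i, torusDist u v < √13 / 6 :=
    fun _ hu _ hv => (torusDist_le_torusDiam hu hv).trans_lt (hdiam i)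
  have hline : vline x ⊆ F c := by
    intro u hu
    obtain ⟨i, hi⟩ := hcov u
    rcases eq_or_ne i c with rfl | hic
    · exact hi
    · exact absurd (hmono i hic) (nonempty_iff_ne_empty.mp ⟨u, hu, hi⟩)
  obtain ⟨j, k, hcjk⟩ : ∃ j k : Fin 3, ∀ i, i = c ∨ i = j ∨ i = k := by
    fin_cases c
    exacts [⟨1, 2, by decide⟩, ⟨0, 2, by decide⟩, ⟨0, 1, by decide⟩]
  refine false_of_vline_subset (j := j) (k := k) hclosed hsmall (fun u => ?_) hline
  obtain ⟨i, hi⟩ := hcov u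
  rcases hcjk i with rfl | rfl | rfl <;> simp [hi]
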